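/- arXiv:1510.03324 — 4 statements merged into one kernel-verified Lean document; each statement's English description precedes it below -/
import Mathlib

section
/- Let S and T be d-by-d integer matrices, each with irreducible characteristic polynomial over ℚ, that are diagonalizable over a finite Galois extension K of ℚ. If S and T have a common eigenvector v ∈ K^d (i.e., Sv = λ_S v and Tv = λ_T v for some λ_S, λ_T ∈ K with v ≠ 0), then S and T commute. -/
/-!
The Galois conjugates `σ ∘ v` of a common eigenvector are again common eigenvectors of `S` and `T`,
so `S` and `T` commute on their span `V`. The traces of the coordinates of a suitable multiple
of `v` form a nonzero rational vector in `V`, so the rational points of `V` are a nonzero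
`S`-invariant subspace of `ℚ^d`. As the characteristic polynomial of `S` is irreducible, that
subspace is all of `ℚ^d`, whence `V = K^d`.
-/

open Polynomial

namespace Module.End

variable {F V : Type*} [Field F] [AddCommGroup V] [Module F V]

theorem aeval_restrict_apply {f : End F V} {W : Submodule F V} (hW : ∀ x ∈ W, f x ∈ W)
    (p : F[X]) (x : W) : (aeval (f.restrict hW) p x : V) = aeval f p x := by
  induction p using Polynomial.induction_on' with
  | add p q hp hq => simp only [map_add, LinearMap.add_apply, Submodule.coe_add, hp, hq]
  | monomial n a =>
    simp only [aeval_monomial, pow_restrict n hW, Module.End.mul_apply, algebraMap_end_apply,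
      Submodule.coe_smul, LinearMap.coe_restrict_apply]

theorem eq_top_of_irreducible_charpoly [FiniteDimensional F V] {f : End F V}
    (hf : Irreducible f.charpoly) {W : Submodule F V} (hW : ∀ x ∈ W, f x ∈ W) (hW0 : W ≠ ⊥) :
    W = ⊤ := by
  set g := f.restrict hW
  have : Nontrivial W := Submodule.nontrivial_iff_ne_bot.mpr hW0
  have hdvd : minpoly F g ∣ f.charpoly := minpoly.dvd _ _ <| by
    refine LinearMap.ext fun x => Subtype.ext ?_
    rw [aeval_restrict_apply, LinearMap.aeval_self_charpoly]
    rfl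
  have hmin : minpoly F g = f.charpoly := by
    refine (eq_of_monic_of_associated (LinearMap.charpoly_monic f) (minpoly.monic ?_) ?_).symm
    · exact Algebra.IsIntegral.isIntegral g
    · exact ((hf.dvd_iff.mp hdvd).resolve_left (minpoly.not_isUnit F g))
  refine Submodule.eq_top_of_finrank_eq (le_antisymm (Submodule.finrank_le W) ?_)
  calc finrank F V = (minpoly F g).natDegree := by rw [hmin, LinearMap.charpoly_natDegree]
    _ ≤ g.charpoly.natDegree :=
        natDegree_le_of_dvd (LinearMap.minpoly_dvd_charpoly g) (LinearMap.charpoly_monic g).ne_zero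
    _ = finrank F W := LinearMap.charpoly_natDegree g

end Module.End

namespace Matrix

variable {n : Type*} [Fintype n]

theorem commute_of_span_common_eigenvectors_eq_top [DecidableEq n] {K ι : Type*} [CommRing K]
    {M N : Matrix n n K} {b : ι → n → K} (hb : Submodule.span K (Set.range b) = ⊤)
    (hM : ∀ i, ∃ l : K, M *ᵥ b i = l • b i) (hN : ∀ i, ∃ l : K, N *ᵥ b i = l • b i) :
    Commute M N := by
  refine toLin'.injective (LinearMap.ext_on_range hb fun i => ?_)
  obtain ⟨l, hl⟩ := hM i
  obtain ⟨m, hm⟩ := hN i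
  simp only [toLin'_apply, ← mulVec_mulVec, hl, hm, mulVec_smul, smul_comm l m]

variable {F K : Type*} [Field F] [Field K] [Algebra F K]

theorem map_algebraMap_mulVec_comp_algEquiv (σ : K ≃ₐ[F] K) (M : Matrix n n F) (v : n → K) :
    M.map (algebraMap F K) *ᵥ (σ ∘ v) = σ ∘ (M.map (algebraMap F K) *ᵥ v) := by
  have hσ : σ ∘ algebraMap F K = algebraMap F K := funext σ.commutes
  funext i
  simpa [map_map, hσ] using (RingHom.map_mulVec (σ : K →+* K) (M.map (algebraMap F K)) v i).symm

theorem map_algebraMap_mulVec_algebraMap_comp (M : Matrix n n F) (w : n → F) :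
    M.map (algebraMap F K) *ᵥ (algebraMap F K ∘ w) = algebraMap F K ∘ (M *ᵥ w) :=
  funext fun i => (RingHom.map_mulVec _ M w i).symm

theorem map_algebraMap_mulVec_comp_algEquiv_eq_smul {M : Matrix n n F} {v : n → K} {l : K}
    (h : M.map (algebraMap F K) *ᵥ v = l • v) (σ : K ≃ₐ[F] K) :
    M.map (algebraMap F K) *ᵥ (σ ∘ v) = σ l • (σ ∘ v) := by
  rw [map_algebraMap_mulVec_comp_algEquiv, h]
  funext i
  simp

end Matrix

open Matrix

section galoisOrbitSpan

variable {n : Type*} {F K : Type*} [Field F] [Field K] [Algebra F K]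

variable (F) in
def galoisOrbitSpan (v : n → K) : Submodule K (n → K) :=
  Submodule.span K (Set.range fun σ : K ≃ₐ[F] K => σ ∘ v)

theorem exists_algebraMap_comp_mem_galoisOrbitSpan [FiniteDimensional F K] [IsGalois F K]
    {v : n → K} (hv : v ≠ 0) : ∃ w : n → F, w ≠ 0 ∧ algebraMap F K ∘ w ∈ galoisOrbitSpan F v := by
  obtain ⟨i, hvi⟩ := Function.ne_iff.mp hv
  obtain ⟨x, hx⟩ := DFunLike.ne_iff.mp (Algebra.trace_ne_zero F K)
  -- `c` scales the `i`-th coordinate of `c • v` to `x`, whose trace is nonzero.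
  set c := x / v i
  refine ⟨fun j => Algebra.trace F K (c * v j), fun h => hx ?_, ?_⟩
  · simpa [c, div_mul_cancel₀ x hvi] using congrFun h i
  · have : algebraMap F K ∘ (fun j => Algebra.trace F K (c * v j)) =
        ∑ σ : K ≃ₐ[F] K, σ c • (σ ∘ v) := by
      funext j
      simp [trace_eq_sum_automorphisms]
    rw [this]
    exact Submodule.sum_mem _ fun σ _ => Submodule.smul_mem _ _ (Submodule.subset_span ⟨σ, rfl⟩)

variable [Fintype n]

theorem galoisOrbitSpan_le_comap_mulVecLin {M : Matrix n n F} {v : n → K} {l : K}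
    (h : M.map (algebraMap F K) *ᵥ v = l • v) :
    galoisOrbitSpan F v ≤ (galoisOrbitSpan F v).comap (M.map (algebraMap F K)).mulVecLin := by
  refine Submodule.span_le.mpr ?_
  rintro _ ⟨σ, rfl⟩
  rw [SetLike.mem_coe, Submodule.mem_comap, mulVecLin_apply,
    map_algebraMap_mulVec_comp_algEquiv_eq_smul h]
  exact Submodule.smul_mem _ _ (Submodule.subset_span ⟨σ, rfl⟩)

theorem galoisOrbitSpan_eq_top [DecidableEq n] [FiniteDimensional F K] [IsGalois F K]
    {M : Matrix n n F} (hM : Irreducible M.charpoly) {v : n → K} (hv : v ≠ 0) {l : K}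
    (h : M.map (algebraMap F K) *ᵥ v = l • v) : galoisOrbitSpan F v = ⊤ := by
  set V := galoisOrbitSpan F v
  -- the `F`-rational points of `V`, an `M`-invariant subspace of `F^n`
  set W : Submodule F (n → F) := (V.restrictScalars F).comap ((Algebra.linearMap F K).compLeft n)
  have hmem : ∀ w, w ∈ W ↔ algebraMap F K ∘ w ∈ V := fun w => Iff.rfl
  have hW : ∀ w ∈ W, toLin' M w ∈ W := fun w hw => by
    rw [hmem, toLin'_apply, ← map_algebraMap_mulVec_algebraMap_comp]
    exact galoisOrbitSpan_le_comap_mulVecLin h hw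
  obtain ⟨w, hw0, hwV⟩ := exists_algebraMap_comp_mem_galoisOrbitSpan (F := F) hv
  have hWtop : W = ⊤ := Module.End.eq_top_of_irreducible_charpoly (by rwa [charpoly_toLin'])
    hW ((Submodule.ne_bot_iff W).mpr ⟨w, hwV, hw0⟩)
  rw [eq_top_iff, ← (Pi.basisFun K n).span_eq, Submodule.span_le]
  rintro _ ⟨j, rfl⟩
  have hj := (hmem (Pi.single j 1)).mp (hWtop ▸ Submodule.mem_top)
  rw [SetLike.mem_coe, Pi.basisFun_apply]
  convert hj using 1
  funext i
  simp [Pi.single_apply, apply_ite]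

end galoisOrbitSpan

theorem Matrix.commute_of_common_eigenvector {n F K : Type*} [Fintype n] [DecidableEq n] [Field F]
    [Field K] [Algebra F K] [FiniteDimensional F K] [IsGalois F K] {M N : Matrix n n F}
    (hM : Irreducible M.charpoly) {v : n → K} (hv : v ≠ 0) {l m : K}
    (hMv : M.map (algebraMap F K) *ᵥ v = l • v) (hNv : N.map (algebraMap F K) *ᵥ v = m • v) :
    Commute M N :=
  .of_map (f := (algebraMap F K).mapMatrix) (Matrix.map_injective (algebraMap F K).injective) <|
    commute_of_span_common_eigenvectors_eq_top (galoisOrbitSpan_eq_top hM hv hMv)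
      (fun σ => ⟨_, map_algebraMap_mulVec_comp_algEquiv_eq_smul hMv σ⟩)
      (fun σ => ⟨_, map_algebraMap_mulVec_comp_algEquiv_eq_smul hNv σ⟩)

theorem common_eigenvector_implies_commute_general
    (d : ℕ) (K : Type*) [Field K] [Algebra ℚ K] [FiniteDimensional ℚ K] [IsGalois ℚ K]
    (S T : Matrix (Fin d) (Fin d) ℤ)
    (hSirr : Irreducible ((S.map (Int.cast : ℤ → ℚ)).charpoly))
    (v : Fin d → K) (hv : v ≠ 0) (lS lT : K)
    (hvS : (S.map (Int.cast : ℤ → K)).mulVec v = lS • v)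
    (hvT : (T.map (Int.cast : ℤ → K)).mulVec v = lT • v) :
    S * T = T * S := by
  have hcast : ∀ N : Matrix (Fin d) (Fin d) ℤ,
      N.map (Int.cast : ℤ → K) = (N.map (Int.cast : ℤ → ℚ)).map (algebraMap ℚ K) := fun N => by
    rw [Matrix.map_map]
    exact congrArg N.map (funext fun x => (map_intCast (algebraMap ℚ K) x).symm)
  rw [hcast] at hvS hvT
  exact Commute.of_map (f := (Int.castRingHom ℚ).mapMatrix)
    (Matrix.map_injective Int.cast_injective) (Matrix.commute_of_common_eigenvector hSirr hv hvS hvT)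

/-- Two integer matrices with irreducible characteristic polynomials over `ℚ`,
diagonalizable over a finite Galois extension `K` of `ℚ`, that share a common eigenvector
in `K^d`, must commute. -/
theorem common_eigenvector_implies_commute
    (d : ℕ) (K : Type*) [Field K] [Algebra ℚ K] [FiniteDimensional ℚ K] [IsGalois ℚ K]
    (S T : Matrix (Fin d) (Fin d) ℤ)
    (hSirr : Irreducible ((S.map (Int.cast : ℤ → ℚ)).charpoly))
    (hTirr : Irreducible ((T.map (Int.cast : ℤ → ℚ)).charpoly))
    (hSdiag : ∃ (P : Matrix (Fin d) (Fin d) K) (g : Fin d → K), IsUnit P.det ∧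
      S.map (Int.cast : ℤ → K) = P * Matrix.diagonal g * P⁻¹)
    (hTdiag : ∃ (P : Matrix (Fin d) (Fin d) K) (g : Fin d → K), IsUnit P.det ∧
      T.map (Int.cast : ℤ → K) = P * Matrix.diagonal g * P⁻¹)
    (v : Fin d → K) (hv : v ≠ 0) (lS lT : K)
    (hvS : (S.map (Int.cast : ℤ → K)).mulVec v = lS • v)
    (hvT : (T.map (Int.cast : ℤ → K)).mulVec v = lT • v) :
    S * T = T * S :=
  common_eigenvector_implies_commute_general d K S T hSirr v hv lS lT hvS hvT
end

section
/- Let M₁ and M₂ be Riemannian manifolds, A ⊆ M₁, and B ⊆ M₁ × M₂. For a ∈ M₁ let B_a = B ∩ ({a} × M₂), and assume B_a is nonempty for all a ∈ A. Then dim_H(B) ≥ dim_H(A) + inf_{a ∈ A} dim_H(B_a), where dim_H denotes Hausdorff dimension. -/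
/-!
Fix `σ < dim_H A` and `τ < dim_H B_a` (`a ∈ A`). A set of positive `τ`-dimensional Hausdorff
measure has positive `τ`-content, so after splitting `A` into countably many pieces every slice
`B_a` has `τ`-content at least some `c > 0`. Let `(E_i)` cover `B` by sets of diameter `≤ 1`,
sorted into dyadic levels `j` by diameter (about `2⁻ʲ`). For `a ∈ A` the slices of the `E_i`
cover `B_a`, so against weights `w qʲ` of total mass `c / 2`, where `q = 2^σ / 2^s` with
`σ < s < dim_H A`, some level `j` carries slice content `≥ w qʲ`. The points of `A` chosen at
level `j` lie in dyadic cubes of side `2⁻ʲ`, whose number is bounded since a set of diameter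
`≤ 2⁻ʲ` meets at most `3^m` of them. Summing over `j`, the `s`-content of `A` is at most
`K ∑ diam(E_i)^(σ+τ)`; hence `μH[σ + τ] B > 0` and `σ + τ ≤ dim_H B`.
-/

open MeasureTheory Metric Set Function
open scoped ENNReal NNReal

noncomputable def hausdorffContent {X : Type*} [EMetricSpace X] (d : ℝ) : OuterMeasure X :=
  OuterMeasure.mkMetric'.pre (fun s => ediam s ^ d) ⊤

section HausdorffContent

variable {X : Type*} [EMetricSpace X] {d : ℝ} {s : Set X}

theorem hausdorffContent_le_tsum {ι : Type*} [Countable ι] {t : ι → Set X}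
    (hst : s ⊆ ⋃ i, t i) : hausdorffContent d s ≤ ∑' i, ediam (t i) ^ d :=
  calc hausdorffContent d s ≤ ∑' i, hausdorffContent d (t i) :=
        (measure_mono hst).trans (measure_iUnion_le _)
    _ ≤ ∑' i, ediam (t i) ^ d :=
      ENNReal.tsum_le_tsum fun _ => OuterMeasure.mkMetric'.pre_le le_top

theorem hausdorffContent_apply (d : ℝ) (s : Set X) :
    hausdorffContent d s = ⨅ (t : ℕ → Set X) (_ : s ⊆ ⋃ n, t n),
      ∑' n, ⨆ _ : (t n).Nonempty, ediam (t n) ^ d := by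
  simp [hausdorffContent, OuterMeasure.mkMetric'.pre, OuterMeasure.boundedBy_apply,
    MeasureTheory.extend]

theorem hausdorffMeasure_eq_zero_of_hausdorffContent_eq_zero [MeasurableSpace X] [BorelSpace X]
    (hd : 0 < d) (hs : hausdorffContent d s = 0) : μH[d] s = 0 := by
  rw [Measure.hausdorffMeasure_apply]
  refine le_antisymm (iSup₂_le fun r hr => le_of_forall_gt fun c hc => ?_) zero_le
  -- a cover of total weight below `r ^ d` consists of sets of diameter below `r`
  have hδ : hausdorffContent d s < min c (r ^ d) := by
    rw [hs]; exact lt_min hc (ENNReal.rpow_pos_of_nonneg hr hd.le)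
  rw [hausdorffContent_apply] at hδ
  obtain ⟨t, hst, ht⟩ := by simpa only [iInf_lt_iff] using hδ
  have hdiam (n : ℕ) : ediam (t n) ≤ r := by
    rcases (t n).eq_empty_or_nonempty with hn | hn
    · simp [hn]
    · refine ((ENNReal.rpow_lt_rpow_iff hd).1 ?_).le
      refine lt_of_le_of_lt ?_ (ht.trans_le (min_le_right _ _))
      exact (le_iSup (fun _ : (t n).Nonempty => ediam (t n) ^ d) hn).trans (ENNReal.le_tsum n)
  exact (iInf₂_le t hst).trans_lt ((iInf_le _ hdiam).trans_lt (ht.trans_le (min_le_left _ _)))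

theorem hausdorffContent_pos_of_lt_dimH {d : ℝ≥0} (hd : 0 < d) (hs : (d : ℝ≥0∞) < dimH s) :
    0 < hausdorffContent d s := by
  borelize X
  refine pos_iff_ne_zero.2 fun h => ?_
  have := hausdorffMeasure_eq_zero_of_hausdorffContent_eq_zero (NNReal.coe_pos.2 hd) h
  simp [hausdorffMeasure_of_lt_dimH hs] at this

end HausdorffContent

theorem exists_dyadic_scale {d : ℝ≥0∞} (hd : d ≤ 1) :
    ∃ j : ℕ, d ≤ 2⁻¹ ^ j ∧ (d = 0 ∨ 2⁻¹ ^ (j + 1) < d) := by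
  rcases eq_or_ne d 0 with rfl | hd0
  · exact ⟨0, by simp, .inl rfl⟩
  lift d to ℝ≥0 using ne_top_of_le_ne_top ENNReal.one_ne_top hd
  obtain ⟨j, hj₁, hj₂⟩ := exists_nat_pow_near_of_lt_one (pos_iff_ne_zero.2 (by exact_mod_cast hd0))
    (by exact_mod_cast hd) (inv_pos.2 two_pos) (inv_lt_one_of_one_lt₀ one_lt_two)
  have hcast (n : ℕ) : (2⁻¹ : ℝ≥0∞) ^ n = ((2⁻¹ : ℝ≥0) ^ n : ℝ≥0) := by
    rw [ENNReal.coe_pow, ENNReal.coe_inv two_ne_zero, ENNReal.coe_ofNat]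
  refine ⟨j, ?_, .inr ?_⟩
  · rw [hcast]; exact_mod_cast hj₂
  · rw [hcast]; exact_mod_cast hj₁

theorem rpow_le_two_rpow_pow_mul_rpow_add {d : ℝ≥0∞} {j : ℕ} {σ τ : ℝ} (hσ : 0 ≤ σ) (hτ : 0 < τ)
    (hd : d = 0 ∨ 2⁻¹ ^ (j + 1) < d) : d ^ τ ≤ (2 ^ σ) ^ (j + 1) * d ^ (σ + τ) := by
  rcases hd with rfl | hd
  · simp [ENNReal.zero_rpow_of_pos hτ]
  have hd0 : d ≠ 0 := (hd.trans_le' zero_le).ne'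
  rcases eq_or_ne d ⊤ with rfl | hdt
  · simp [ENNReal.top_rpow_of_pos hτ, ENNReal.top_rpow_of_pos (add_pos_of_nonneg_of_pos hσ hτ)]
  have hone : 1 ≤ (2 ^ σ) ^ (j + 1) * d ^ σ := by
    have h1 : 1 ≤ 2 ^ (j + 1) * d := by
      rw [← ENNReal.inv_le_iff_le_mul (by simp) (by simp), ENNReal.inv_pow]
      exact hd.le
    rw [← ENNReal.rpow_natCast, ← ENNReal.rpow_mul, mul_comm σ, ENNReal.rpow_mul,
      ENNReal.rpow_natCast, ← ENNReal.mul_rpow_of_nonneg _ _ hσ]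
    simpa using ENNReal.rpow_le_rpow h1 hσ
  calc d ^ τ = 1 * d ^ τ := (one_mul _).symm
    _ ≤ (2 ^ σ) ^ (j + 1) * d ^ σ * d ^ τ := by gcongr
    _ = (2 ^ σ) ^ (j + 1) * d ^ (σ + τ) := by rw [ENNReal.rpow_add _ _ hd0 hdt, mul_assoc]

theorem two_inv_pow_rpow (j : ℕ) (s : ℝ) : ((2⁻¹ : ℝ≥0∞) ^ j) ^ s = ((2 ^ s)⁻¹) ^ j := by
  rw [← ENNReal.rpow_natCast, ← ENNReal.rpow_mul, mul_comm, ENNReal.rpow_mul, ENNReal.inv_rpow,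
    ENNReal.rpow_natCast]

theorem two_rpow_div_two_rpow_lt_one {σ s : ℝ} (h : σ < s) : (2 : ℝ≥0∞) ^ σ / 2 ^ s < 1 := by
  refine (ENNReal.div_lt_iff (by simp) (by simp)).2 ?_
  rw [one_mul]
  exact ENNReal.rpow_lt_rpow_of_exponent_lt ENNReal.one_lt_two ENNReal.ofNat_ne_top h

section ProdMk

variable {X Y : Type*} [EMetricSpace X] [EMetricSpace Y]

theorem isometry_prodMk_left (a : X) : Isometry (Prod.mk a : Y → X × Y) := fun _ _ => by
  simp [Prod.edist_eq]

theorem ediam_preimage_prodMk_le (a : X) (E : Set (X × Y)) :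
    ediam (Prod.mk a ⁻¹' E) ≤ ediam E := by
  rw [← (isometry_prodMk_left a).ediam_image]
  exact ediam_mono (image_preimage_subset _ _)

theorem dimH_preimage_prodMk_le (a : X) (B : Set (X × Y)) :
    dimH (Prod.mk a ⁻¹' B) ≤ dimH B := by
  rw [← (isometry_prodMk_left a).dimH_image]
  exact dimH_mono (image_preimage_subset _ _)

theorem dimH_le_of_forall_preimage_prodMk_nonempty {A : Set X} {B : Set (X × Y)}
    (h : ∀ a ∈ A, (Prod.mk a ⁻¹' B).Nonempty) : dimH A ≤ dimH B := by
  refine (dimH_mono fun a ha => ?_).trans (LipschitzWith.prod_fst.dimH_image_le B)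
  obtain ⟨y, hy⟩ := h a ha
  exact ⟨(a, y), hy, rfl⟩

end ProdMk

theorem Int.floor_mem_Icc_of_abs_sub_le_one {a b : ℝ} (h : |a - b| ≤ 1) :
    ⌊a⌋ ∈ Finset.Icc (⌊b⌋ - 1) (⌊b⌋ + 1) := by
  rw [abs_sub_le_iff] at h
  refine Finset.mem_Icc.2 ⟨Int.le_floor.2 ?_, Int.le_of_lt_add_one (Int.floor_lt.2 ?_)⟩
  · push_cast; linarith [Int.floor_le b]
  · push_cast; linarith [Int.lt_floor_add_one b]

section DyadicCube

variable {ι : Type*} [Fintype ι]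

noncomputable def dyadicIndex (j : ℕ) (x : ι → ℝ) : ι → ℤ := fun c => ⌊2 ^ j * x c⌋

theorem edist_le_two_inv_pow_iff {j : ℕ} {x y : ι → ℝ} :
    edist x y ≤ 2⁻¹ ^ j ↔ ∀ c, |2 ^ j * x c - 2 ^ j * y c| ≤ 1 := by
  have h2 : (0 : ℝ) < 2 ^ j := by positivity
  have hpow : (2⁻¹ : ℝ≥0∞) ^ j = ENNReal.ofReal ((2 ^ j)⁻¹) := by
    rw [ENNReal.ofReal_inv_of_pos h2, ENNReal.ofReal_pow zero_le_two, ENNReal.ofReal_ofNat,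
      ENNReal.inv_pow]
  rw [edist_pi_le_iff]
  simp only [edist_dist, Real.dist_eq, hpow,
    ENNReal.ofReal_le_ofReal_iff (inv_nonneg.2 h2.le), ← mul_sub, abs_mul, abs_of_pos h2]
  exact forall_congr' fun c => by rw [← one_div, le_div_iff₀' h2]

theorem ediam_dyadicCube_le (j : ℕ) (v : ι → ℤ) :
    ediam (dyadicIndex j ⁻¹' {v}) ≤ 2⁻¹ ^ j :=
  ediam_le fun _ hx _ hy => edist_le_two_inv_pow_iff.2 fun c =>
    (Int.abs_sub_lt_one_of_floor_eq_floor (congrFun (hx.trans hy.symm) c)).le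

theorem encard_image_dyadicIndex_le {j : ℕ} {G : Set (ι → ℝ)} (hG : ediam G ≤ 2⁻¹ ^ j) :
    (dyadicIndex j '' G).encard ≤ 3 ^ Fintype.card ι := by
  classical
  obtain rfl | ⟨x₀, hx₀⟩ := G.eq_empty_or_nonempty
  · simp
  have hsub : dyadicIndex j '' G ⊆
      Fintype.piFinset fun c => Finset.Icc (dyadicIndex j x₀ c - 1) (dyadicIndex j x₀ c + 1) := by
    rintro _ ⟨x, hx, rfl⟩
    refine Fintype.mem_piFinset.2 fun c => Int.floor_mem_Icc_of_abs_sub_le_one ?_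
    exact edist_le_two_inv_pow_iff.1 ((edist_le_ediam_of_mem hx hx₀).trans hG) c
  refine (encard_le_encard hsub).trans ?_
  rw [encard_coe_eq_coe_finsetCard, Fintype.card_piFinset]
  have hcard (w : ℤ) : (w + 1 + 1 - (w - 1)).toNat = 3 := by omega
  simp [Int.card_Icc, hcard]

theorem hausdorffContent_le_tsum_encard_mul {s : ℝ} (hs : 0 ≤ s) {A : Set (ι → ℝ)}
    {V : ℕ → Set (ι → ℤ)} (hAV : A ⊆ ⋃ j, dyadicIndex j ⁻¹' V j) :
    hausdorffContent s A ≤ ∑' j, (V j).encard * ((2 : ℝ≥0∞) ^ s)⁻¹ ^ j := by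
  have hcover : A ⊆ ⋃ p : Σ j, V j, dyadicIndex p.1 ⁻¹' {(p.2 : ι → ℤ)} := fun a ha => by
    obtain ⟨j, hj⟩ := mem_iUnion.1 (hAV ha)
    exact mem_iUnion.2 ⟨⟨j, ⟨_, hj⟩⟩, rfl⟩
  calc hausdorffContent s A ≤ ∑' p : Σ j, V j, ediam (dyadicIndex p.1 ⁻¹' {(p.2 : ι → ℤ)}) ^ s :=
        hausdorffContent_le_tsum hcover
    _ ≤ ∑' p : Σ j, V j, ((2 ^ s)⁻¹) ^ p.1 := ENNReal.tsum_le_tsum fun p => by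
        rw [← two_inv_pow_rpow]
        exact ENNReal.rpow_le_rpow (ediam_dyadicCube_le _ _) hs
    _ = ∑' j, (V j).encard * ((2 : ℝ≥0∞) ^ s)⁻¹ ^ j := by
        rw [ENNReal.tsum_sigma']
        simp_rw [ENNReal.tsum_set_const]

end DyadicCube

section Slicing

variable {ι Y : Type*} [Fintype ι] [EMetricSpace Y]

theorem tsum_ediam_preimage_prodMk_rpow_le {κ : Type*} {j : ℕ} {τ : ℝ} (hτ : 0 < τ)
    {E : Set ((ι → ℝ) × Y)} (hE : ediam E ≤ 2⁻¹ ^ j) {x : κ → ι → ℝ}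
    (hx : Injective (dyadicIndex j ∘ x)) :
    ∑' k, ediam (Prod.mk (x k) ⁻¹' E) ^ τ ≤ 3 ^ Fintype.card ι * ediam E ^ τ := by
  set K := {k | x k ∈ Prod.fst '' E}
  have hterm (k : κ) : ediam (Prod.mk (x k) ⁻¹' E) ^ τ ≤ K.indicator (fun _ => ediam E ^ τ) k := by
    by_cases hk : k ∈ K
    · rw [indicator_of_mem hk]
      exact ENNReal.rpow_le_rpow (ediam_preimage_prodMk_le _ _) hτ.le
    · have : Prod.mk (x k) ⁻¹' E = ∅ :=
        eq_empty_of_forall_notMem fun y hy => hk ⟨(x k, y), hy, rfl⟩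
      simp [this, ENNReal.zero_rpow_of_pos hτ]
  have hK : K.encard ≤ 3 ^ Fintype.card ι := by
    refine (encard_le_encard_of_injOn (s := K) (t := dyadicIndex j '' (Prod.fst '' E))
      (fun _ hk => mem_image_of_mem _ hk) hx.injOn).trans (encard_image_dyadicIndex_le ?_)
    simpa using (LipschitzWith.prod_fst.ediam_image_le E).trans (by simpa using hE)
  calc ∑' k, ediam (Prod.mk (x k) ⁻¹' E) ^ τ
      ≤ ∑' k, K.indicator (fun _ => ediam E ^ τ) k := ENNReal.tsum_le_tsum hterm
    _ = K.encard * ediam E ^ τ := by rw [← tsum_subtype, ENNReal.tsum_set_const]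
    _ ≤ 3 ^ Fintype.card ι * ediam E ^ τ := by
      gcongr
      exact_mod_cast hK

theorem mul_encard_image_dyadicIndex_le {κ : Type*} {j : ℕ} {τ : ℝ} (hτ : 0 < τ)
    {E : κ → Set ((ι → ℝ) × Y)} (hE : ∀ i, ediam (E i) ≤ 2⁻¹ ^ j) {A : Set (ι → ℝ)}
    {w : ℝ≥0∞} (hA : ∀ a ∈ A, w ≤ ∑' i, ediam (Prod.mk a ⁻¹' E i) ^ τ) :
    w * (dyadicIndex j '' A).encard ≤ 3 ^ Fintype.card ι * ∑' i, ediam (E i) ^ τ := by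
  choose x hxA hx using fun v : dyadicIndex j '' A => v.2
  have hinj : Injective (dyadicIndex j ∘ x) := fun v v' h => Subtype.ext (by simpa [hx] using h)
  calc w * (dyadicIndex j '' A).encard = ∑' _ : dyadicIndex j '' A, w := by
        rw [ENNReal.tsum_set_const, mul_comm]
    _ ≤ ∑' v, ∑' i, ediam (Prod.mk (x v) ⁻¹' E i) ^ τ :=
        ENNReal.tsum_le_tsum fun v => hA _ (hxA v)
    _ = ∑' i, ∑' v, ediam (Prod.mk (x v) ⁻¹' E i) ^ τ := ENNReal.tsum_comm
    _ ≤ ∑' i, 3 ^ Fintype.card ι * ediam (E i) ^ τ :=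
        ENNReal.tsum_le_tsum fun i => tsum_ediam_preimage_prodMk_rpow_le hτ (hE i) hinj
    _ = 3 ^ Fintype.card ι * ∑' i, ediam (E i) ^ τ := ENNReal.tsum_mul_left

theorem encard_image_dyadicIndex_mul_le_of_scale {κ : Type*} {j : ℕ} {σ s τ : ℝ} (hσ : 0 ≤ σ)
    (hτ : 0 < τ) {E : κ → Set ((ι → ℝ) × Y)} (hE : ∀ i, ediam (E i) ≤ 2⁻¹ ^ j)
    (hE' : ∀ i, ediam (E i) = 0 ∨ 2⁻¹ ^ (j + 1) < ediam (E i)) {A : Set (ι → ℝ)} {w : ℝ≥0∞}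
    (hw₀ : w ≠ 0) (hw₁ : w ≠ ⊤)
    (hA : ∀ a ∈ A, w * (2 ^ σ / 2 ^ s) ^ j ≤ ∑' i, ediam (Prod.mk a ⁻¹' E i) ^ τ) :
    (dyadicIndex j '' A).encard * ((2 : ℝ≥0∞) ^ s)⁻¹ ^ j ≤
      3 ^ Fintype.card ι * 2 ^ σ * w⁻¹ * ∑' i, ediam (E i) ^ (σ + τ) := by
  have hscale : ∑' i, ediam (E i) ^ τ ≤ (2 ^ σ) ^ (j + 1) * ∑' i, ediam (E i) ^ (σ + τ) := by
    rw [← ENNReal.tsum_mul_left]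
    exact ENNReal.tsum_le_tsum fun i => rpow_le_two_rpow_pow_mul_rpow_add hσ hτ (hE' i)
  have hb₀ : ((2 : ℝ≥0∞) ^ σ) ^ j ≠ 0 := pow_ne_zero _ (by simp)
  have hb₁ : ((2 : ℝ≥0∞) ^ σ) ^ j ≠ ⊤ := ENNReal.pow_ne_top (by simp)
  rw [← ENNReal.mul_le_mul_iff_right (mul_ne_zero hw₀ hb₀) (ENNReal.mul_ne_top hw₁ hb₁)]
  calc w * (2 ^ σ) ^ j * ((dyadicIndex j '' A).encard * ((2 : ℝ≥0∞) ^ s)⁻¹ ^ j)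
      = w * (2 ^ σ / 2 ^ s) ^ j * (dyadicIndex j '' A).encard := by
        simp only [div_eq_mul_inv]; ring
    _ ≤ 3 ^ Fintype.card ι * ∑' i, ediam (E i) ^ τ := mul_encard_image_dyadicIndex_le hτ hE hA
    _ ≤ 3 ^ Fintype.card ι * ((2 ^ σ) ^ (j + 1) * ∑' i, ediam (E i) ^ (σ + τ)) := by gcongr
    _ = w * w⁻¹ * (3 ^ Fintype.card ι * ((2 ^ σ) ^ (j + 1) * ∑' i, ediam (E i) ^ (σ + τ))) := by
        rw [ENNReal.mul_inv_cancel hw₀ hw₁, one_mul]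
    _ = w * (2 ^ σ) ^ j * (3 ^ Fintype.card ι * 2 ^ σ * w⁻¹ * ∑' i, ediam (E i) ^ (σ + τ)) := by
        ring

theorem hausdorffContent_le_mul_tsum_of_slices {A : Set (ι → ℝ)} {B : Set ((ι → ℝ) × Y)}
    {σ s τ : ℝ} (hσ : 0 ≤ σ) (hσs : σ < s) (hτ : 0 < τ) {c : ℝ≥0∞} (hc0 : c ≠ 0) (hc : c ≠ ⊤)
    (hA : ∀ a ∈ A, c ≤ hausdorffContent τ (Prod.mk a ⁻¹' B)) {E : ℕ → Set ((ι → ℝ) × Y)}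
    (hEB : B ⊆ ⋃ i, E i) (hE : ∀ i, ediam (E i) ≤ 1) :
    hausdorffContent s A ≤ 3 ^ Fintype.card ι * 2 ^ σ * (c / 2 * (1 - 2 ^ σ / 2 ^ s))⁻¹ *
      ∑' i, ediam (E i) ^ (σ + τ) := by
  set q : ℝ≥0∞ := 2 ^ σ / 2 ^ s
  set w := c / 2 * (1 - q)
  have hq : q < 1 := two_rpow_div_two_rpow_lt_one hσs
  have hw₀ : w ≠ 0 := mul_ne_zero (by simp [hc0]) (tsub_pos_iff_lt.2 hq).ne'
  have hw₁ : w ≠ ⊤ := ENNReal.mul_ne_top (ENNReal.div_ne_top hc two_ne_zero) (by simp)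
  have hw : ∑' j, w * q ^ j = c / 2 := by
    rw [ENNReal.tsum_mul_left, ENNReal.tsum_geometric, mul_assoc,
      ENNReal.mul_inv_cancel (tsub_pos_iff_lt.2 hq).ne' (by simp), mul_one]
  choose lev hlev hlev' using fun i => exists_dyadic_scale (hE i)
  set S : (ι → ℝ) → ℕ → ℝ≥0∞ := fun a j => ∑' i : lev ⁻¹' {j}, ediam (Prod.mk a ⁻¹' E i) ^ τ
  -- the weights `w * q ^ j` add up to `c / 2 < c`, so some dyadic level carries more than its share
  have hlevel (a : ι → ℝ) (ha : a ∈ A) : ∃ j, w * q ^ j ≤ S a j := by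
    by_contra! hlt
    have hcov : Prod.mk a ⁻¹' B ⊆ ⋃ i, Prod.mk a ⁻¹' E i := by
      rw [← preimage_iUnion]; exact preimage_mono hEB
    have := calc c ≤ ∑' i, ediam (Prod.mk a ⁻¹' E i) ^ τ :=
          (hA a ha).trans (hausdorffContent_le_tsum hcov)
      _ = ∑' j, S a j := (ENNReal.tsum_fiberwise _ lev).symm
      _ ≤ c / 2 := hw ▸ ENNReal.tsum_le_tsum fun j => (hlt j).le
    exact (ENNReal.half_lt_self hc0 hc).not_ge this
  set V : ℕ → Set (ι → ℤ) := fun j => dyadicIndex j '' {a ∈ A | w * q ^ j ≤ S a j}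
  have hAV : A ⊆ ⋃ j, dyadicIndex j ⁻¹' V j := fun a ha => by
    obtain ⟨j, hj⟩ := hlevel a ha
    exact mem_iUnion.2 ⟨j, a, ⟨ha, hj⟩, rfl⟩
  have hlev_eq (j : ℕ) (i : lev ⁻¹' {j}) : lev i = j := i.2
  calc hausdorffContent s A ≤ ∑' j, (V j).encard * ((2 : ℝ≥0∞) ^ s)⁻¹ ^ j :=
        hausdorffContent_le_tsum_encard_mul (hσ.trans hσs.le) hAV
    _ ≤ ∑' j, 3 ^ Fintype.card ι * 2 ^ σ * w⁻¹ * ∑' i : lev ⁻¹' {j}, ediam (E i) ^ (σ + τ) :=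
        ENNReal.tsum_le_tsum fun j => encard_image_dyadicIndex_mul_le_of_scale hσ hτ
          (fun i => by simpa only [hlev_eq j i] using hlev i)
          (fun i => by simpa only [hlev_eq j i] using hlev' i) hw₀ hw₁ fun _ ha => ha.2
    _ = 3 ^ Fintype.card ι * 2 ^ σ * w⁻¹ * ∑' i, ediam (E i) ^ (σ + τ) := by
        rw [ENNReal.tsum_mul_left, ENNReal.tsum_fiberwise (fun i => ediam (E i) ^ (σ + τ)) lev]

theorem hausdorffMeasure_ne_zero_of_slices [MeasurableSpace Y] [BorelSpace Y]
    {A : Set (ι → ℝ)} {B : Set ((ι → ℝ) × Y)} {σ s τ : ℝ} (hσ : 0 ≤ σ) (hσs : σ < s) (hτ : 0 < τ)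
    {c : ℝ≥0∞} (hc0 : c ≠ 0) (hc : c ≠ ⊤) (hA : ∀ a ∈ A, c ≤ hausdorffContent τ (Prod.mk a ⁻¹' B))
    (hA₀ : hausdorffContent s A ≠ 0) : μH[σ + τ] B ≠ 0 := by
  set K : ℝ≥0∞ := 3 ^ Fintype.card ι * 2 ^ σ * (c / 2 * (1 - 2 ^ σ / 2 ^ s))⁻¹
  have hK : K ≠ ⊤ := ENNReal.mul_ne_top (ENNReal.mul_ne_top (by simp) (by simp)) <|
    ENNReal.inv_ne_top.2 <| mul_ne_zero (by simp [hc0])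
      (tsub_pos_iff_lt.2 (two_rpow_div_two_rpow_lt_one hσs)).ne'
  have hστ : 0 < σ + τ := by positivity
  have hle : hausdorffContent s A / K ≤ μH[σ + τ] B := by
    rw [Measure.hausdorffMeasure_apply]
    refine le_iSup₂_of_le 1 one_pos (le_iInf₂ fun E hEB => le_iInf fun hE => ?_)
    refine ENNReal.div_le_of_le_mul'
      ((hausdorffContent_le_mul_tsum_of_slices hσ hσs hτ hc0 hc hA hEB hE).trans ?_)
    gcongr with i
    rcases (E i).eq_empty_or_nonempty with h | h
    · simp [h, ENNReal.zero_rpow_of_pos hστ]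
    · exact le_iSup (fun _ : (E i).Nonempty => ediam (E i) ^ (σ + τ)) h
  exact ((ENNReal.div_pos_iff.2 ⟨hA₀, hK⟩).trans_le hle).ne'

theorem coe_add_le_dimH_of_slices {A : Set (ι → ℝ)} {B : Set ((ι → ℝ) × Y)} {σ τ : ℝ≥0}
    (hσ : (σ : ℝ≥0∞) < dimH A) (hτ : 0 < τ) {c : ℝ≥0∞} (hc0 : c ≠ 0) (hc : c ≠ ⊤)
    (hA : ∀ a ∈ A, c ≤ hausdorffContent τ (Prod.mk a ⁻¹' B)) :
    (σ : ℝ≥0∞) + τ ≤ dimH B := by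
  borelize Y
  obtain ⟨s, hσs, hs⟩ := ENNReal.lt_iff_exists_nnreal_btwn.1 hσ
  rw [ENNReal.coe_lt_coe] at hσs
  have hA₀ := hausdorffContent_pos_of_lt_dimH (hσs.trans_le' zero_le) hs
  rw [← ENNReal.coe_add]
  refine le_dimH_of_hausdorffMeasure_ne_zero ?_
  exact_mod_cast hausdorffMeasure_ne_zero_of_slices σ.2 hσs (NNReal.coe_pos.2 hτ) hc0 hc hA hA₀.ne'

theorem coe_add_le_dimH {A : Set (ι → ℝ)} {B : Set ((ι → ℝ) × Y)} {σ τ : ℝ≥0}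
    (hσ : (σ : ℝ≥0∞) < dimH A) (hτ : ∀ a ∈ A, (τ : ℝ≥0∞) < dimH (Prod.mk a ⁻¹' B)) :
    (σ : ℝ≥0∞) + τ ≤ dimH B := by
  rcases eq_or_ne τ 0 with rfl | hτ₀
  · have hne (a : ι → ℝ) (ha : a ∈ A) : (Prod.mk a ⁻¹' B).Nonempty :=
      nonempty_iff_ne_empty.2 fun h => by simpa [h] using hτ a ha
    simpa using hσ.le.trans (dimH_le_of_forall_preimage_prodMk_nonempty hne)
  set A' : ℕ → Set (ι → ℝ) :=
    fun k => {a ∈ A | ((k : ℝ≥0∞) + 1)⁻¹ ≤ hausdorffContent τ (Prod.mk a ⁻¹' B)}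
  have hA' : A ⊆ ⋃ k, A' k := fun a ha => by
    obtain ⟨k, hk⟩ := ENNReal.exists_inv_nat_lt
      (hausdorffContent_pos_of_lt_dimH (pos_iff_ne_zero.2 hτ₀) (hτ a ha)).ne'
    exact mem_iUnion.2 ⟨k, ha, (ENNReal.inv_le_inv.2 le_self_add).trans hk.le⟩
  obtain ⟨k, hk⟩ := lt_iSup_iff.1 (hσ.trans_le ((dimH_mono hA').trans_eq (dimH_iUnion A')))
  exact coe_add_le_dimH_of_slices hk (pos_iff_ne_zero.2 hτ₀) (by simp) (by simp) fun _ ha => ha.2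

end Slicing

/-- Marstrand Slicing Theorem (Kleinbock–Margulis form), for subsets of
Euclidean spaces: if every slice `B_a`, `a ∈ A`, is nonempty, then
`dim_H B ≥ dim_H A + inf_{a ∈ A} dim_H B_a`. -/
theorem marstrand_slicing
    (m n : ℕ) (A : Set (Fin m → ℝ)) (B : Set ((Fin m → ℝ) × (Fin n → ℝ)))
    (hA : A.Nonempty)
    (hne : ∀ a ∈ A, {y : Fin n → ℝ | (a, y) ∈ B}.Nonempty) :
    dimH A + ⨅ a ∈ A, dimH {y : Fin n → ℝ | (a, y) ∈ B} ≤ dimH B := by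
  obtain ⟨a₀, ha₀⟩ := hA
  rcases eq_or_ne (⨅ a ∈ A, dimH {y : Fin n → ℝ | (a, y) ∈ B}) 0 with ht | ht
  · rw [ht, add_zero]
    exact dimH_le_of_forall_preimage_prodMk_nonempty hne
  rcases eq_or_ne (dimH A) 0 with hA₀ | hA₀
  · rw [hA₀, zero_add]
    exact (iInf₂_le a₀ ha₀).trans (dimH_preimage_prodMk_le a₀ B)
  refine le_of_forall_lt fun r hr => ?_
  obtain ⟨σ, hσ, τ, hτ, hr⟩ := ENNReal.exists_lt_add_of_lt_add hr hA₀ ht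
  lift σ to ℝ≥0 using hσ.ne_top
  lift τ to ℝ≥0 using hτ.ne_top
  exact hr.trans_le (coe_add_le_dimH hσ fun a ha => hτ.trans_le (iInf₂_le a ha))
end

section
/- Let (f_n)_{n≥0} be a sequence of measurable functions on I = [-1/2, 1/2] (with Lebesgue measure), uniformly bounded by a constant M, and suppose there are constants C > 0 and λ > 1 such that |∫_I f_n f_m dθ| ≤ C λ^{-|n-m|/2} for all n, m ≥ 0. Then for almost every φ ∈ I, (1/N) Σ_{n=0}^{N-1} f_n(φ) → 0 as N → ∞. -/
open MeasureTheory Filter Finset Topology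

/-!
Write `S_N = ∑_{n<N} f_n`. Expanding the square, `∫ S_N² = ∑_{n,m<N} ∫ f_n f_m`, and since the
correlations decay geometrically in `|n - m|`, every row of this double sum is bounded, so
`∫ S_N² = O(N)`. Along the squares `N = K²` this gives `∑_K ∫ (S_{K²} / K²)² < ∞`, hence
`S_{K²} / K² → 0` almost everywhere (Chebyshev and Borel–Cantelli). For `K² ≤ N < (K+1)²` at most
`2K` terms, each bounded by `M`, separate `S_N` from `S_{K²}`, which transfers the limit to all `N`.
-/

theorem Nat.abs_cast_sub_cast_eq_dist (n m : ℕ) : |(n : ℝ) - m| = n.dist m := by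
  rcases le_total m n with h | h
  · rw [Nat.dist_eq_sub_of_le_right h, Nat.cast_sub h, abs_of_nonneg (by simpa using h)]
  · rw [Nat.dist_eq_sub_of_le h, Nat.cast_sub h, abs_sub_comm, abs_of_nonneg (by simpa using h)]

theorem Real.rpow_neg_abs_sub_div_two {lam : ℝ} (hlam : 0 ≤ lam) (n m : ℕ) :
    lam ^ (-|(n : ℝ) - m| / 2) = (lam ^ (-(1 : ℝ) / 2)) ^ n.dist m := by
  rw [← Real.rpow_natCast, ← Real.rpow_mul hlam, Nat.abs_cast_sub_cast_eq_dist]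
  ring_nf

theorem sum_pow_le_of_injOn {r : ℝ} (hr0 : 0 ≤ r) (hr1 : r < 1) {s : Finset ℕ} {g : ℕ → ℕ}
    (hg : Set.InjOn g s) : ∑ m ∈ s, r ^ g m ≤ (1 - r)⁻¹ := by
  rw [← sum_image hg, ← tsum_geometric_of_lt_one hr0 hr1]
  exact (summable_geometric_of_lt_one hr0 hr1).sum_le_tsum _ fun i _ => pow_nonneg hr0 i

theorem sum_pow_dist_le {r : ℝ} (hr0 : 0 ≤ r) (hr1 : r < 1) (s : Finset ℕ) (n : ℕ) :
    ∑ m ∈ s, r ^ n.dist m ≤ 2 * (1 - r)⁻¹ := by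
  -- `m ↦ n.dist m` is injective on each side of `n`
  rw [← sum_filter_add_sum_filter_not s (· ≤ n), two_mul]
  gcongr <;> refine sum_pow_le_of_injOn hr0 hr1 fun a ha b hb hab => ?_
  · simp only [coe_filter, Set.mem_ofPred_eq] at ha hb
    rw [Nat.dist_eq_sub_of_le_right ha.2, Nat.dist_eq_sub_of_le_right hb.2] at hab
    omega
  · simp only [coe_filter, Set.mem_ofPred_eq, not_le] at ha hb
    rw [Nat.dist_eq_sub_of_le ha.2.le, Nat.dist_eq_sub_of_le hb.2.le] at hab
    omega

section SecondMoment

variable {α : Type*} [MeasurableSpace α] {μ : Measure α}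

theorem integrable_sq_sum {f : ℕ → α → ℝ}
    (hint : ∀ n m, Integrable (fun x => f n x * f m x) μ) (s : Finset ℕ) :
    Integrable (fun x => (∑ n ∈ s, f n x) ^ 2) μ := by
  simp_rw [sq, sum_mul_sum]
  exact integrable_finsetSum _ fun n _ => integrable_finsetSum _ fun m _ => hint n m

theorem integral_sq_sum_le {f : ℕ → α → ℝ} {C r : ℝ} (hC : 0 ≤ C) (hr0 : 0 ≤ r) (hr1 : r < 1)
    (hint : ∀ n m, Integrable (fun x => f n x * f m x) μ)
    (hcorr : ∀ n m, ∫ x, f n x * f m x ∂μ ≤ C * r ^ n.dist m) (s : Finset ℕ) :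
    ∫ x, (∑ n ∈ s, f n x) ^ 2 ∂μ ≤ #s * (2 * C * (1 - r)⁻¹) := by
  calc ∫ x, (∑ n ∈ s, f n x) ^ 2 ∂μ = ∑ n ∈ s, ∑ m ∈ s, ∫ x, f n x * f m x ∂μ := by
        simp_rw [sq, sum_mul_sum]
        rw [integral_finsetSum _ fun n _ => integrable_finsetSum _ fun m _ => hint n m]
        exact sum_congr rfl fun n _ => integral_finsetSum _ fun m _ => hint n m
    _ ≤ ∑ n ∈ s, C * ∑ m ∈ s, r ^ n.dist m := by
        simp_rw [mul_sum]
        gcongr with n _ m _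
        exact hcorr n m
    _ ≤ ∑ n ∈ s, C * (2 * (1 - r)⁻¹) := by
        gcongr with n _
        exact sum_pow_dist_le hr0 hr1 s n
    _ = #s * (2 * C * (1 - r)⁻¹) := by
        rw [sum_const, nsmul_eq_mul]
        ring

theorem ae_tendsto_zero_of_summable_integral_norm {E : Type*} [NormedAddCommGroup E]
    {g : ℕ → α → E} (hg : ∀ k, Integrable (g k) μ)
    (hsum : Summable fun k => ∫ x, ‖g k x‖ ∂μ) :
    ∀ᵐ x ∂μ, Tendsto (fun k => g k x) atTop (𝓝 0) := by
  have hfin : ∑' k, eLpNorm (g k) 1 μ ≠ ⊤ := by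
    simp_rw [eLpNorm_one_eq_lintegral_enorm,
      ← fun k => ofReal_integral_norm_eq_lintegral_enorm (hg k)]
    rw [← ENNReal.ofReal_tsum_of_nonneg (fun k => integral_nonneg fun x => norm_nonneg _) hsum]
    exact ENNReal.ofReal_ne_top
  filter_upwards [summable_norm_of_tsum_eLpNorm_ne_top le_rfl (fun k => (hg k).1) hfin] with x hx
  exact tendsto_zero_iff_norm_tendsto_zero.2 hx.tendsto_atTop_zero

theorem ae_tendsto_div_sq_of_integral_sq_le {S : ℕ → α → ℝ} {A : ℝ}
    (hS : ∀ N, Integrable (fun x => S N x ^ 2) μ) (hmom : ∀ N, ∫ x, S N x ^ 2 ∂μ ≤ N * A) :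
    ∀ᵐ x ∂μ, Tendsto (fun k : ℕ => S (k ^ 2) x / (k : ℝ) ^ 2) atTop (𝓝 0) := by
  set g : ℕ → α → ℝ := fun k x => (S (k ^ 2) x / (k : ℝ) ^ 2) ^ 2
  have hg (k : ℕ) : Integrable (g k) μ := by
    simpa only [g, div_pow] using (hS (k ^ 2)).div_const (((k : ℝ) ^ 2) ^ 2)
  have hg_le (k : ℕ) : ∫ x, ‖g k x‖ ∂μ ≤ A / (k : ℝ) ^ 2 := by
    simp_rw [g, norm_pow, Real.norm_eq_abs, sq_abs, div_pow, integral_div]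
    calc (∫ x, S (k ^ 2) x ^ 2 ∂μ) / ((k : ℝ) ^ 2) ^ 2
        ≤ (k ^ 2 : ℕ) * A / ((k : ℝ) ^ 2) ^ 2 := by gcongr; exact hmom _
      _ = A / (k : ℝ) ^ 2 := by
          rcases eq_or_ne k 0 with rfl | hk
          · simp
          · field_simp
            push_cast
            ring
  have hsum : Summable fun k => ∫ x, ‖g k x‖ ∂μ :=
    .of_nonneg_of_le (fun k => integral_nonneg fun _ => norm_nonneg _) hg_le
      (by simpa [div_eq_mul_inv] using (Real.summable_nat_pow_inv.2 one_lt_two).mul_left A)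
  filter_upwards [ae_tendsto_zero_of_summable_integral_norm hg hsum] with x hx
  have habs := (Real.continuous_sqrt.tendsto 0).comp hx
  simp only [g, Function.comp_def, Real.sqrt_sq_eq_abs, Real.sqrt_zero] at habs
  exact (tendsto_zero_iff_abs_tendsto_zero _).2 habs

end SecondMoment

theorem Nat.tendsto_sqrt_atTop : Tendsto Nat.sqrt atTop atTop :=
  tendsto_atTop_atTop.2 fun b => ⟨b * b, fun _ hN => Nat.le_sqrt.2 hN⟩

theorem abs_sum_Ico_le {a : ℕ → ℝ} {M : ℝ} (hbd : ∀ n, |a n| ≤ M) (k N : ℕ) :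
    |∑ n ∈ Ico k N, a n| ≤ (N - k : ℕ) * M := by
  simpa using (abs_sum_le_sum_abs a (Ico k N)).trans (sum_le_sum fun n _ => hbd n)

theorem abs_sum_range_div_le {a : ℕ → ℝ} {M : ℝ} (hbd : ∀ n, |a n| ≤ M) {k N : ℕ} (hk : 0 < k)
    (hkN : k ^ 2 ≤ N) (hNk : N < (k + 1) ^ 2) :
    |(∑ n ∈ range N, a n) / N| ≤ |(∑ n ∈ range (k ^ 2), a n) / (k : ℝ) ^ 2| + 2 * M / k := by
  have hM : 0 ≤ M := (abs_nonneg _).trans (hbd 0)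
  have hkN' : (k : ℝ) ^ 2 ≤ N := by exact_mod_cast hkN
  have htail : |∑ n ∈ Ico (k ^ 2) N, a n| ≤ 2 * k * M := by
    refine (abs_sum_Ico_le hbd _ _).trans ?_
    gcongr
    rw [add_sq] at hNk
    exact_mod_cast (by omega : N - k ^ 2 ≤ 2 * k)
  rw [← sum_range_add_sum_Ico _ hkN]
  simp only [abs_div, abs_pow, Nat.abs_cast]
  calc |∑ n ∈ range (k ^ 2), a n + ∑ n ∈ Ico (k ^ 2) N, a n| / N
      ≤ (|∑ n ∈ range (k ^ 2), a n| + 2 * k * M) / N := by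
        gcongr
        exact (abs_add_le _ _).trans (by gcongr)
    _ ≤ (|∑ n ∈ range (k ^ 2), a n| + 2 * k * M) / (k : ℝ) ^ 2 := by gcongr
    _ = |∑ n ∈ range (k ^ 2), a n| / (k : ℝ) ^ 2 + 2 * M / k := by field_simp

theorem tendsto_average_of_tendsto_average_sq {a : ℕ → ℝ} {M : ℝ} (hbd : ∀ n, |a n| ≤ M)
    (hsq : Tendsto (fun k : ℕ => (∑ n ∈ range (k ^ 2), a n) / (k : ℝ) ^ 2) atTop (𝓝 0)) :
    Tendsto (fun N : ℕ => (∑ n ∈ range N, a n) / N) atTop (𝓝 0) := by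
  have hbound := (hsq.abs.add (tendsto_const_div_atTop_nhds_zero_nat (2 * M))).comp
    Nat.tendsto_sqrt_atTop
  rw [abs_zero, zero_add] at hbound
  refine squeeze_zero_norm' ?_ hbound
  filter_upwards [eventually_gt_atTop 0] with N hN
  exact abs_sum_range_div_le hbd (Nat.sqrt_pos.2 hN) (Nat.sqrt_le' N) (Nat.lt_succ_sqrt' N)

/-- If `(f_n)` is a uniformly bounded sequence of measurable functions on
`I = [-1/2, 1/2]` with almost-orthogonality `|∫_I f_n f_m| ≤ C λ^{-|n-m|/2}` for some
`λ > 1`, then for a.e. `φ ∈ I` the averages `(1/N) Σ_{n<N} f_n(φ)` tend to `0`. -/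
theorem almost_orthogonal_averages_tend_to_zero
    (f : ℕ → ℝ → ℝ) (M : ℝ)
    (hmeas : ∀ n, Measurable (f n))
    (hbd : ∀ n x, |f n x| ≤ M)
    (C lam : ℝ) (hC : 0 < C) (hlam : 1 < lam)
    (hcorr : ∀ n m : ℕ,
      |∫ θ in Set.Icc (-(1 : ℝ)/2) (1/2), f n θ * f m θ| ≤
        C * lam ^ (-(|(n : ℝ) - (m : ℝ)|) / 2)) :
    ∀ᵐ φ ∂(volume.restrict (Set.Icc (-(1 : ℝ)/2) (1/2))),
      Tendsto (fun N : ℕ => (1 / (N : ℝ)) * ∑ n ∈ Finset.range N, f n φ)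
        atTop (nhds 0) := by
  set r := lam ^ (-(1 : ℝ) / 2)
  have hr0 : 0 ≤ r := by positivity
  have hr1 : r < 1 := Real.rpow_lt_one_of_one_lt_of_neg hlam (by norm_num)
  have hM : 0 ≤ M := (abs_nonneg _).trans (hbd 0 0)
  have hint (n m : ℕ) :
      Integrable (fun θ => f n θ * f m θ) (volume.restrict (Set.Icc (-(1 : ℝ)/2) (1/2))) :=
    (integrable_const (M * M)).mono' ((hmeas n).mul (hmeas m)).aestronglyMeasurable <|
      ae_of_all _ fun θ => by
        rw [Real.norm_eq_abs, abs_mul]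
        exact mul_le_mul (hbd n θ) (hbd m θ) (abs_nonneg _) hM
  have hcorr' (n m : ℕ) :
      ∫ θ in Set.Icc (-(1 : ℝ)/2) (1/2), f n θ * f m θ ≤ C * r ^ n.dist m := by
    have h := hcorr n m
    rw [Real.rpow_neg_abs_sub_div_two (by linarith) n m] at h
    exact (le_abs_self _).trans h
  have hmom (N : ℕ) := integral_sq_sum_le hC.le hr0 hr1 hint hcorr' (range N)
  simp only [card_range] at hmom
  filter_upwards [ae_tendsto_div_sq_of_integral_sq_le
    (fun N => integrable_sq_sum hint (range N)) hmom] with φ hφ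
  simpa only [one_div_mul_eq_div] using tendsto_average_of_tendsto_average_sq (hbd · φ) hφ
end

section
/- Let A, B ⊆ ℝ be such that A is α-winning for Schmidt's game for some α ∈ (0,1) played on an interval A₀ ⊆ ℝ. Then A ∩ A₀ is dense in A₀ and has Hausdorff dimension 1; in particular any α-winning subset of an interval is thick (full Hausdorff dimension in every nonempty open subinterval). -/
open MeasureTheory

/-- Schmidt's `(α,β)`-game played on the subset `A₀` of `ℝ` with target set `S`:
Bob first chooses a closed ball `B₀ = B(x 0, ρ)` with `0 < ρ ≤ 1` contained in `A₀`; then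
alternately Alice chooses a ball `A_{n+1} = B(y_{n+1}, ρ α (αβ)^n) ⊆ B_n` and Bob chooses
`B_{n+1} = B(x_{n+1}, ρ (αβ)^{n+1}) ⊆ A_{n+1}`.  Alice's strategy `σ` sees `ρ` and the list
of Bob's previous centers.  `S` is `(α,β)`-winning if Alice has a strategy whose moves are
always legal (against legal play of Bob) and which forces the intersection point into `S`. -/
def AliceWinsSchmidt (α β : ℝ) (S A₀ : Set ℝ) : Prop :=
  ∃ σ : ℝ → List ℝ → ℝ,
    ∀ ρ : ℝ, 0 < ρ → ρ ≤ 1 →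
    ∀ x : ℕ → ℝ,
      Metric.closedBall (x 0) ρ ⊆ A₀ →
      (∀ n : ℕ, Metric.closedBall (x (n + 1)) (ρ * (α * β) ^ (n + 1)) ⊆
        Metric.closedBall (σ ρ (List.ofFn fun i : Fin (n + 1) => x i)) (ρ * α * (α * β) ^ n)) →
      (∀ n : ℕ, Metric.closedBall (σ ρ (List.ofFn fun i : Fin (n + 1) => x i))
          (ρ * α * (α * β) ^ n) ⊆ Metric.closedBall (x n) (ρ * (α * β) ^ n)) ∧
      (∀ z : ℝ, Filter.Tendsto x Filter.atTop (nhds z) → z ∈ S)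

/-- `S` is `α`-winning on `A₀` if it is `(α,β)`-winning for every `β ∈ (0,1)`. -/
def IsAlphaWinning (α : ℝ) (S A₀ : Set ℝ) : Prop :=
  ∀ β : ℝ, 0 < β → β < 1 → AliceWinsSchmidt α β S A₀

/-! Fix `β = 1/(2N)` and a winning strategy of Alice. Inside each ball of Alice, Bob may place
his next ball around any of `N` equally spaced points, so every digit sequence `ω ∈ Fin N ^ ℕ`
describes a legal play of Bob, whose outcome `z ω` lies in the target set. Outcomes of sequences
that first differ at step `n` are at distance `≳ (αβ)^n`, so `z ω ↦ 0.ω₀ω₁ω₂…` (base `N`) is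
Hölder of exponent `d` as soon as `N⁻¹ ≤ (αβ)^d`; it maps the outcomes onto `[0, 1]`, hence they
have dimension `≥ d`. Since `α/(2N) ≥ N^{-1/d}` for large `N` whenever `d < 1`, the dimension
is `1`. -/

open Metric Set Filter Topology
open scoped NNReal ENNReal

theorem HolderOnWith.of_dist_le {X Y : Type*} [PseudoMetricSpace X] [PseudoMetricSpace Y]
    {C r : ℝ≥0} {f : X → Y} {s : Set X}
    (h : ∀ x ∈ s, ∀ y ∈ s, dist (f x) (f y) ≤ C * dist x y ^ (r : ℝ)) :
    HolderOnWith C r f s := by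
  intro x hx y hy
  rw [edist_dist, edist_dist, ENNReal.ofReal_rpow_of_nonneg dist_nonneg r.coe_nonneg,
    ← ENNReal.ofReal_coe_nnreal, ← ENNReal.ofReal_mul C.coe_nonneg]
  exact ENNReal.ofReal_le_ofReal (h x hx y hy)

theorem le_dimH_range_of_separated {X : Type*} [MetricSpace X] {N : ℕ} (hN : 1 < N)
    {z : (ℕ → Fin N) → X} {K q : ℝ} {d : ℝ≥0} (hK : 0 < K) (hq : 0 < q) (hd : 0 < d)
    (hNq : (N : ℝ)⁻¹ ≤ q ^ (d : ℝ))
    (hsep : ∀ ω ω', ω ≠ ω' → K * q ^ PiNat.firstDiff ω ω' ≤ dist (z ω) (z ω')) :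
    (d : ℝ≥0∞) ≤ dimH (range z) := by
  have hinj : z.Injective := fun ω ω' hzz => by
    by_contra hne
    have := hsep ω ω' hne
    rw [hzz, dist_self] at this
    exact this.not_gt (by positivity)
  have : Nonempty (ℕ → Fin N) := ⟨fun _ => ⟨0, by omega⟩⟩
  set f := Real.ofDigits ∘ Function.invFun z
  have hfz (ω) : f (z ω) = Real.ofDigits ω :=
    congrArg Real.ofDigits (Function.leftInverse_invFun hinj ω)
  have hholder : HolderOnWith (K⁻¹ ^ (d : ℝ)).toNNReal d f (range z) := by
    refine HolderOnWith.of_dist_le ?_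
    rintro _ ⟨ω, rfl⟩ _ ⟨ω', rfl⟩
    rcases eq_or_ne ω ω' with rfl | hne
    · rw [dist_self, dist_self]; positivity
    rw [hfz, hfz, Real.dist_eq, Real.coe_toNNReal _ (by positivity),
      ← Real.mul_rpow (by positivity) dist_nonneg]
    set n := PiNat.firstDiff ω ω'
    calc |Real.ofDigits ω - Real.ofDigits ω'|
        ≤ ((N : ℝ) ^ n)⁻¹ :=
          Real.abs_ofDigits_sub_ofDigits_le fun i hi => PiNat.apply_eq_of_lt_firstDiff hi
      _ = ((N : ℝ)⁻¹) ^ n := (inv_pow _ _).symm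
      _ ≤ (q ^ (d : ℝ)) ^ n := by gcongr
      _ = (K⁻¹ * (K * q ^ n)) ^ (d : ℝ) := by
          rw [inv_mul_cancel_left₀ hK.ne', Real.rpow_pow_comm hq.le]
      _ ≤ (K⁻¹ * dist (z ω) (z ω')) ^ (d : ℝ) := by gcongr; exact hsep ω ω' hne
  have hIcc : Icc (0 : ℝ) 1 ⊆ f '' range z := by
    intro t ht
    obtain ⟨ω, -, rfl⟩ := Real.ofDigits_SurjOn hN ht
    exact ⟨z ω, mem_range_self ω, hfz ω⟩
  have hone : (1 : ℝ≥0∞) ≤ dimH (range z) / d := by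
    calc (1 : ℝ≥0∞) = dimH (Icc (0 : ℝ) 1) := by
          rw [Real.dimH_of_nonempty_interior (by simp), Module.finrank_self, Nat.cast_one]
      _ ≤ dimH (f '' range z) := dimH_mono hIcc
      _ ≤ dimH (range z) / d := hholder.dimH_image_le hd
  rwa [ENNReal.le_div_iff_mul_le (by simp [hd.ne']) (by simp), one_mul] at hone

theorem exists_nat_inv_le_div_rpow {c d : ℝ} (hc : 0 < c) (hd : d < 1) :
    ∃ N : ℕ, 1 < N ∧ (N : ℝ)⁻¹ ≤ (c / N) ^ d := by
  have hgrow : Tendsto (fun N : ℕ => c ^ d * (N : ℝ) ^ (1 - d)) atTop atTop :=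
    ((tendsto_rpow_atTop (sub_pos.2 hd)).comp tendsto_natCast_atTop_atTop).const_mul_atTop
      (Real.rpow_pos_of_pos hc d)
  obtain ⟨N, hN1, hN⟩ := ((eventually_gt_atTop 1).and (hgrow.eventually_ge_atTop 1)).exists
  have hN0 : (0 : ℝ) < N := by exact_mod_cast zero_lt_one.trans hN1
  refine ⟨N, hN1, ?_⟩
  calc (N : ℝ)⁻¹ = 1 / N := one_div _ |>.symm
    _ ≤ c ^ d * (N : ℝ) ^ (1 - d) / N := by gcongr
    _ = (c / N) ^ d := by
        rw [Real.div_rpow hc.le hN0.le, Real.rpow_sub hN0, Real.rpow_one]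
        field_simp

theorem exists_tendsto_forall_mem_closedBall {X : Type*} [PseudoMetricSpace X] [CompleteSpace X]
    {x : ℕ → X} {r : ℕ → ℝ} (hr0 : ∀ n, 0 ≤ r n) (hr : Tendsto r atTop (𝓝 0))
    (hsub : ∀ n, closedBall (x (n + 1)) (r (n + 1)) ⊆ closedBall (x n) (r n)) :
    ∃ z, Tendsto x atTop (𝓝 z) ∧ ∀ n, z ∈ closedBall (x n) (r n) := by
  have hmem {n m : ℕ} (hnm : n ≤ m) : x m ∈ closedBall (x n) (r n) :=
    antitone_nat_of_succ_le (f := fun n => closedBall (x n) (r n)) hsub hnm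
      (mem_closedBall_self (hr0 m))
  have hcauchy : CauchySeq x := by
    refine cauchySeq_of_le_tendsto_0 (fun n => 2 * r n) (fun n m k hn hm => ?_)
      (by simpa using hr.const_mul 2)
    calc dist (x n) (x m) ≤ dist (x n) (x k) + dist (x m) (x k) := dist_triangle_right _ _ _
      _ ≤ 2 * r k := by linarith [mem_closedBall.1 (hmem hn), mem_closedBall.1 (hmem hm)]
  obtain ⟨z, hz⟩ := cauchySeq_tendsto_of_complete hcauchy
  exact ⟨z, hz, fun n => isClosed_closedBall.mem_of_tendsto hz
    ((eventually_ge_atTop n).mono fun m hm => hmem hm)⟩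

/-- Bob's centres in a play where he answers Alice's centre `y` at stage `n` by `r n y`. -/
noncomputable def bobCenters (σ : List ℝ → ℝ) (r : ℕ → ℝ → ℝ) (c : ℝ) : ℕ → ℝ
  | 0 => c
  | n + 1 => r n (σ (List.ofFn fun i : Fin (n + 1) => bobCenters σ r c i))

theorem bobCenters_congr {σ : List ℝ → ℝ} {r r' : ℕ → ℝ → ℝ} {c : ℝ} {n : ℕ}
    (h : ∀ i < n, r i = r' i) {k : ℕ} (hk : k ≤ n) :
    bobCenters σ r c k = bobCenters σ r' c k := by
  induction k using Nat.strong_induction_on with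
  | _ k ih =>
    cases k with
    | zero => rw [bobCenters, bobCenters]
    | succ k =>
      rw [bobCenters, bobCenters, h k hk]
      congr 2
      exact List.ofFn_inj.2 (funext fun i => ih i (by omega) (by omega))

noncomputable def spreadPoint (N : ℕ) (y R : ℝ) (j : Fin N) : ℝ :=
  y + (2 * (j : ℕ) + 1 - N) / N * R

theorem closedBall_spreadPoint_subset {N : ℕ} {y R : ℝ} (hR : 0 ≤ R) (j : Fin N) :
    closedBall (spreadPoint N y R j) (R / (2 * N)) ⊆ closedBall y R := by
  have hN : (0 : ℝ) < N := by exact_mod_cast j.pos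
  have hj : ((j : ℕ) : ℝ) + 1 ≤ N := by exact_mod_cast j.isLt
  have hoffset : |(2 * ((j : ℕ) : ℝ) + 1 - N) / N * R| ≤ (N - 1) / N * R := by
    rw [abs_mul, abs_div, abs_of_pos hN, abs_of_nonneg hR]
    gcongr
    exact abs_le.2 ⟨by linarith [Nat.cast_nonneg (α := ℝ) (j : ℕ)], by linarith⟩
  have hsum : R / (2 * N) + (N - 1) / N * R = R - R / (2 * N) := by field_simp; ring
  refine closedBall_subset_closedBall' ?_
  rw [spreadPoint, Real.dist_eq, add_sub_cancel_left]
  linarith [div_nonneg hR (by positivity : (0 : ℝ) ≤ 2 * N)]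

theorem le_dist_spreadPoint {N : ℕ} {y R : ℝ} (hR : 0 ≤ R) {j j' : Fin N} (h : j ≠ j') :
    2 * R / N ≤ dist (spreadPoint N y R j) (spreadPoint N y R j') := by
  have hjj : (1 : ℝ) ≤ |((j : ℕ) : ℝ) - (j' : ℕ)| := by
    rcases Nat.lt_or_gt_of_ne (Fin.val_ne_of_ne h) with hlt | hlt
    · have : ((j : ℕ) : ℝ) + 1 ≤ (j' : ℕ) := by exact_mod_cast hlt
      rw [abs_sub_comm]; exact le_abs.2 (Or.inl (by linarith))
    · have : ((j' : ℕ) : ℝ) + 1 ≤ (j : ℕ) := by exact_mod_cast hlt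
      exact le_abs.2 (Or.inl (by linarith))
  rw [spreadPoint, spreadPoint, Real.dist_eq]
  calc 2 * R / N ≤ |((j : ℕ) : ℝ) - (j' : ℕ)| * (2 * R / N) :=
        le_mul_of_one_le_left (by positivity) hjj
    _ = _ := by
      rw [← abs_of_nonneg (by positivity : 0 ≤ 2 * R / N), ← abs_mul]
      congr 1; ring

section Winning

variable {α : ℝ} {S A₀ : Set ℝ}

theorem AliceWinsSchmidt.exists_separated_outcomes {N : ℕ} (hα0 : 0 < α) (hα1 : α < 1)
    (hwin : AliceWinsSchmidt α (2 * (N : ℝ))⁻¹ S A₀) {c ρ : ℝ} (hρ0 : 0 < ρ) (hρ1 : ρ ≤ 1)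
    (hball : closedBall c ρ ⊆ A₀) :
    ∃ z : (ℕ → Fin N) → ℝ, (∀ ω, z ω ∈ S ∩ closedBall c ρ) ∧
      ∀ ω ω', ω ≠ ω' →
        ρ * α / N * (α * (2 * (N : ℝ))⁻¹) ^ PiNat.firstDiff ω ω' ≤ dist (z ω) (z ω') := by
  obtain ⟨σ, hσ⟩ := hwin
  set q := α * (2 * (N : ℝ))⁻¹ with hq
  have hq0 : 0 ≤ q := by positivity
  have hq1 : q < 1 := by
    calc q ≤ α :=
          mul_le_of_le_one_right hα0.le (by simpa using Nat.cast_inv_le_one (α := ℝ) (2 * N))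
      _ < 1 := hα1
  have hradius (n : ℕ) : ρ * q ^ (n + 1) = ρ * α * q ^ n / (2 * N) := by rw [hq]; ring
  let bob (ω : ℕ → Fin N) (n : ℕ) (y : ℝ) : ℝ := spreadPoint N y (ρ * α * q ^ n) (ω n)
  let x (ω : ℕ → Fin N) : ℕ → ℝ := bobCenters (σ ρ) (bob ω) c
  have hx_zero (ω) : x ω 0 = c := bobCenters.eq_1 _ _ _
  have hx_succ (ω n) : x ω (n + 1) =
      spreadPoint N (σ ρ (List.ofFn fun i : Fin (n + 1) => x ω i)) (ρ * α * q ^ n) (ω n) :=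
    bobCenters.eq_2 _ _ _ _
  have hlegal (ω n) : closedBall (x ω (n + 1)) (ρ * q ^ (n + 1)) ⊆
      closedBall (σ ρ (List.ofFn fun i : Fin (n + 1) => x ω i)) (ρ * α * q ^ n) := by
    rw [hradius, hx_succ]
    exact closedBall_spreadPoint_subset (by positivity) _
  have hplay (ω) := hσ ρ hρ0 hρ1 (x ω) (by rwa [hx_zero]) (hlegal ω)
  have hlimit (ω) := exists_tendsto_forall_mem_closedBall (x := x ω) (r := fun n => ρ * q ^ n)
    (fun n => by positivity)
    (by simpa using (tendsto_pow_atTop_nhds_zero_of_lt_one hq0 hq1).const_mul ρ)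
    fun n => (hlegal ω n).trans ((hplay ω).1 n)
  choose z hzlim hzmem using hlimit
  refine ⟨z, fun ω => ⟨(hplay ω).2 _ (hzlim ω), by simpa [hx_zero] using hzmem ω 0⟩, ?_⟩
  intro ω ω' hne
  set n := PiNat.firstDiff ω ω'
  have hhistory : (List.ofFn fun i : Fin (n + 1) => x ω i) = List.ofFn fun i => x ω' i :=
    List.ofFn_inj.2 <| funext fun i => bobCenters_congr (r := bob ω) (r' := bob ω')
      (fun k hk => funext fun y => congrArg (spreadPoint N y _) (PiNat.apply_eq_of_lt_firstDiff hk))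
      (Nat.lt_succ_iff.1 i.isLt)
  have hchildren : 2 * (ρ * α * q ^ n) / N ≤ dist (x ω (n + 1)) (x ω' (n + 1)) := by
    rw [hx_succ, hx_succ, hhistory]
    exact le_dist_spreadPoint (by positivity) (PiNat.apply_firstDiff_ne hne)
  have hz : dist (z ω) (x ω (n + 1)) ≤ ρ * α * q ^ n / (2 * N) :=
    hradius n ▸ hzmem ω (n + 1)
  have hz' : dist (z ω') (x ω' (n + 1)) ≤ ρ * α * q ^ n / (2 * N) :=
    hradius n ▸ hzmem ω' (n + 1)
  have htri := dist_triangle4 (x ω (n + 1)) (z ω) (z ω') (x ω' (n + 1))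
  rw [dist_comm (x ω (n + 1)) (z ω)] at htri
  -- The two children of Alice's `n`-th ball are `2R/N` apart and each outcome lies within
  -- `R/(2N)` of its child, where `R = ραqⁿ`.
  have hK : ρ * α / N * q ^ n = 2 * (ρ * α * q ^ n) / N - 2 * (ρ * α * q ^ n / (2 * N)) := by
    ring
  linarith

theorem IsAlphaWinning.le_dimH_inter_closedBall (hα0 : 0 < α) (hα1 : α < 1)
    (hwin : IsAlphaWinning α S A₀) {c ρ : ℝ} (hρ0 : 0 < ρ) (hρ1 : ρ ≤ 1)
    (hball : closedBall c ρ ⊆ A₀) {d : ℝ≥0} (hd0 : 0 < d) (hd1 : d < 1) :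
    (d : ℝ≥0∞) ≤ dimH (S ∩ closedBall c ρ) := by
  obtain ⟨N, hN1, hNq⟩ := exists_nat_inv_le_div_rpow (half_pos hα0) (d := d) hd1
  have hN0 : (0 : ℝ) < N := by exact_mod_cast zero_lt_one.trans hN1
  have hβ1 : (2 * (N : ℝ))⁻¹ < 1 :=
    inv_lt_one_of_one_lt₀ (by linarith [(Nat.one_lt_cast (α := ℝ)).2 hN1])
  obtain ⟨z, hzS, hsep⟩ :=
    (hwin _ (by positivity) hβ1).exists_separated_outcomes hα0 hα1 hρ0 hρ1 hball
  calc (d : ℝ≥0∞) ≤ dimH (range z) :=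
        le_dimH_range_of_separated hN1 (by positivity) (by positivity) hd0
          (by convert hNq using 2; field_simp) hsep
    _ ≤ dimH (S ∩ closedBall c ρ) := dimH_mono (range_subset_iff.2 hzS)

theorem IsAlphaWinning.one_le_dimH_inter (hα0 : 0 < α) (hα1 : α < 1)
    (hwin : IsAlphaWinning α S A₀) {V : Set ℝ} (hV : IsOpen V) (hVA : V ⊆ A₀) (hne : V.Nonempty) :
    1 ≤ dimH (S ∩ V) := by
  obtain ⟨x, hx⟩ := hne
  obtain ⟨ε, hε, hεV⟩ := Metric.isOpen_iff.1 hV x hx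
  have hρ0 : 0 < min (ε / 2) 1 := lt_min (half_pos hε) one_pos
  have hsub : closedBall x (min (ε / 2) 1) ⊆ V :=
    (closedBall_subset_ball ((min_le_left _ _).trans_lt (half_lt_self hε))).trans hεV
  refine ENNReal.le_of_forall_pos_nnreal_lt fun d hd0 hd1 => ?_
  calc (d : ℝ≥0∞) ≤ dimH (S ∩ closedBall x (min (ε / 2) 1)) :=
        hwin.le_dimH_inter_closedBall hα0 hα1 hρ0 (min_le_right _ _) (hsub.trans hVA) hd0
          (ENNReal.coe_lt_one_iff.1 hd1)
    _ ≤ dimH (S ∩ V) := dimH_mono (inter_subset_inter_right S hsub)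

end Winning

/-- An `α`-winning subset of an interval `A₀ = [a,b]` is dense in `A₀`, has
full Hausdorff dimension `1`, and is thick: it has full Hausdorff dimension in every
nonempty open subinterval. -/
theorem winning_sets_are_thick
    (α : ℝ) (hα0 : 0 < α) (hα1 : α < 1)
    (a b : ℝ) (hab : a < b)
    (A : Set ℝ) (hwin : IsAlphaWinning α A (Set.Icc a b)) :
    (∀ x ∈ Set.Icc a b, x ∈ closure (A ∩ Set.Icc a b)) ∧
    dimH (A ∩ Set.Icc a b) = 1 ∧
    ∀ U : Set ℝ, IsOpen U → (U ∩ Set.Ioo a b).Nonempty →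
      dimH (A ∩ Set.Icc a b ∩ U) = 1 := by
  have hthick (U : Set ℝ) (hU : IsOpen U) (hne : (U ∩ Ioo a b).Nonempty) :
      dimH (A ∩ Icc a b ∩ U) = 1 := by
    refine le_antisymm ((dimH_mono (subset_univ _)).trans_eq Real.dimH_univ) ?_
    calc 1 ≤ dimH (A ∩ (U ∩ Ioo a b)) :=
          hwin.one_le_dimH_inter hα0 hα1 (hU.inter isOpen_Ioo)
            (inter_subset_right.trans Ioo_subset_Icc_self) hne
      _ ≤ dimH (A ∩ Icc a b ∩ U) :=
          dimH_mono fun y ⟨hyA, hyU, hy⟩ => ⟨⟨hyA, Ioo_subset_Icc_self hy⟩, hyU⟩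
  refine ⟨fun x hx => mem_closure_iff.2 fun U hU hxU => ?_, ?_, hthick⟩
  · rw [← closure_Ioo hab.ne] at hx
    have hdim := hthick U hU (mem_closure_iff.1 hx U hU hxU)
    obtain ⟨y, hyA, hyU⟩ : (A ∩ Icc a b ∩ U).Nonempty :=
      nonempty_iff_ne_empty.2 fun h => by simp [h] at hdim
    exact ⟨y, hyU, hyA⟩
  · simpa using hthick univ isOpen_univ (by simpa using hab)
end
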